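/- arXiv:1507.06817 — 7 statements merged into one kernel-verified Lean document; each statement's English description precedes it below -/
import Mathlib

section
/- Let X be a compact metric space that is semi-locally connected (i.e., semi-locally connected at every point) and let f : X → X be a homeomorphism. Then f is equicontinuous if and only if f satisfies property (CW), i.e., for every x ∈ X and every subcontinuum C of X with x ∉ C one has inf_{n ∈ ℤ} dist(f^n(x), f^n(C)) > 0. -/
open Metric Filter Topology Set

variable {X : Type*}

/-- The `n`-th iterate (for `n : ℤ`) of a homeomorphism `f : X ≃ₜ X`. -/
def hIter [TopologicalSpace X] (f : X ≃ₜ X) (n : ℤ) : X → X :=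
  ⇑(f.toEquiv ^ n)

/-- `f` is equicontinuous: for every `ε > 0` there is `δ > 0` such that
`d(fⁿ x, fⁿ y) ≤ ε` for all `n : ℤ` whenever `d(x, y) ≤ δ`. -/
def EquicontHomeo [MetricSpace X] (f : X ≃ₜ X) : Prop :=
  ∀ ε > (0 : ℝ), ∃ δ > (0 : ℝ), ∀ x y : X, dist x y ≤ δ →
    ∀ n : ℤ, dist (hIter f n x) (hIter f n y) ≤ ε

/-- Property (CW): `inf_{n ∈ ℤ} dist(fⁿ x, fⁿ C) > 0` for every `x ∈ X` and every
subcontinuum `C` (nonempty compact connected subset) with `x ∉ C`. -/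
def PropCW [MetricSpace X] (f : X ≃ₜ X) : Prop :=
  ∀ (x : X) (C : Set X), C.Nonempty → IsCompact C → IsConnected C → x ∉ C →
    0 < ⨅ n : ℤ, infDist (hIter f n x) (hIter f n '' C)

/-- `X` is semi-locally connected at `p`: every open neighborhood `U` of `p` contains an
open neighborhood `V` of `p` such that `X \ U` is covered by finitely many connected
components of `X \ V`. -/
def SemiLocallyConnectedAt [TopologicalSpace X] (p : X) : Prop :=
  ∀ U : Set X, IsOpen U → p ∈ U → ∃ V : Set X, IsOpen V ∧ p ∈ V ∧ V ⊆ U ∧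
    ∃ 𝒞 : Finset (Set X), (∀ C ∈ 𝒞, ∃ x ∈ Vᶜ, C = connectedComponentIn Vᶜ x) ∧
      Uᶜ ⊆ ⋃ C ∈ 𝒞, C

/-- `x` is an almost automorphic point of `f`. -/
def AlmostAutomorphicPt [MetricSpace X] (f : X ≃ₜ X) (x : X) : Prop :=
  ∀ (n : ℕ → ℤ) (y : X), Tendsto (fun i => hIter f (n i) x) atTop (𝓝 y) →
    Tendsto (fun i => hIter f (-(n i)) y) atTop (𝓝 x)

/-- A set `F ⊆ ℤ` is syndetic if it meets every interval `[n, n + l]` for some fixed `l > 0`. -/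
def SyndeticZ (F : Set ℤ) : Prop :=
  ∃ l > (0 : ℤ), ∀ n : ℤ, ∃ m ∈ F, n ≤ m ∧ m ≤ n + l

/-- `x` is an almost periodic point of `f`. -/
def AlmostPeriodicPt [TopologicalSpace X] (f : X ≃ₜ X) (x : X) : Prop :=
  ∀ U ∈ 𝓝 x, ∃ F : Set ℤ, SyndeticZ F ∧ ∀ n ∈ F, hIter f n x ∈ U

/-- `x` is a locally almost periodic point of `f`. -/
def LocallyAlmostPeriodicPt [TopologicalSpace X] (f : X ≃ₜ X) (x : X) : Prop :=
  ∀ U ∈ 𝓝 x, ∃ V ∈ 𝓝 x, V ⊆ U ∧ ∃ F : Set ℤ, SyndeticZ F ∧ ∀ n ∈ F, hIter f n '' V ⊆ U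

/-- `f` is distal. -/
def DistalHomeo [MetricSpace X] (f : X ≃ₜ X) : Prop :=
  ∀ x y : X, x ≠ y → 0 < ⨅ n : ℤ, dist (hIter f n x) (hIter f n y)

/-- `f` is transitive: some orbit `{fⁿ x : n ∈ ℤ}` is dense. -/
def TransitiveHomeo [TopologicalSpace X] (f : X ≃ₜ X) : Prop :=
  ∃ x : X, Dense (Set.range fun n : ℤ => hIter f n x)

/-! Equicontinuity gives (CW) by pulling back: if `fⁿ x` came `δ`-close to `fⁿ C`, then
`x = f⁻ⁿ (fⁿ x)` would come close to `C`.

Conversely, semi-local connectedness at `q` puts infinitely many terms of any sequence that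
stays away from `q` into one subcontinuum `C ∌ q`, and (CW) keeps the orbits of those terms
uniformly away from the orbit of `q`. Applied to `f⁻ⁿⁱ y` with `fⁿⁱ x → y`, this shows that `x` is a
cluster point of `f⁻ⁿⁱ y`. If `f` were not equicontinuous at `p`, there would be `wᵢ → p` with
`fⁿⁱ wᵢ` staying `ε`-far from `fⁿⁱ p → a`; the same argument at `a` keeps `f⁻ⁿⁱ a` away from `wᵢ`,
hence from `p`, a contradiction. On a compact space equicontinuity at every point is uniform. -/

theorem hIter_neg_hIter [TopologicalSpace X] (f : X ≃ₜ X) (n : ℤ) (x : X) :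
    hIter f (-n) (hIter f n x) = x := by
  simp [hIter]

theorem hIter_hIter_neg [TopologicalSpace X] (f : X ≃ₜ X) (n : ℤ) (x : X) :
    hIter f n (hIter f (-n) x) = x := by
  simp [hIter]

theorem EquicontHomeo.propCW [MetricSpace X] {f : X ≃ₜ X} (hf : EquicontHomeo f) :
    PropCW f := by
  intro x C hne hC _ hxC
  have hpos : 0 < infDist x C := (hC.isClosed.notMem_iff_infDist_pos hne).1 hxC
  obtain ⟨δ, hδ, hfδ⟩ := hf (infDist x C / 2) (by linarith)
  refine hδ.trans_le (le_ciInf fun n => le_of_not_gt fun hlt => ?_)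
  obtain ⟨_, ⟨c, hc, rfl⟩, hlt⟩ := (infDist_lt_iff (hne.image _)).1 hlt
  have := hfδ _ _ hlt.le (-n)
  rw [hIter_neg_hIter, hIter_neg_hIter] at this
  linarith [infDist_le_dist_of_mem (x := x) hc]

theorem equicontHomeo_of_uniformEquicontinuous [MetricSpace X] {f : X ≃ₜ X}
    (hf : UniformEquicontinuous (hIter f)) : EquicontHomeo f := by
  intro ε hε
  obtain ⟨δ, hδ, hfδ⟩ := Metric.uniformEquicontinuous_iff.1 hf ε hε
  exact ⟨δ / 2, by positivity, fun x y hxy n => (hfδ x y (by linarith) n).le⟩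

theorem SemiLocallyConnectedAt.exists_continuum_frequently_mem [TopologicalSpace X]
    [CompactSpace X] {q : X} (hq : SemiLocallyConnectedAt q) {U : Set X} (hU : IsOpen U)
    (hqU : q ∈ U) {ι : Type*} {l : Filter ι} [l.NeBot] {z : ι → X} (hz : ∀ᶠ i in l, z i ∉ U) :
    ∃ C : Set X, IsCompact C ∧ IsConnected C ∧ q ∉ C ∧ ∃ᶠ i in l, z i ∈ C := by
  obtain ⟨V, hV, hqV, -, 𝒞, h𝒞, hcover⟩ := hq U hU hqU
  have : ∃ᶠ i in l, ∃ C ∈ 𝒞, z i ∈ C :=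
    (hz.mono fun i hi => by simpa using hcover hi).frequently
  obtain ⟨C, hC, hfreq⟩ := 𝒞.frequently_exists.1 this
  obtain ⟨x, hx, rfl⟩ := h𝒞 C hC
  have : CompactSpace (Vᶜ : Set X) := isCompact_iff_compactSpace.1 hV.isClosed_compl.isCompact
  refine ⟨_, ?_, isConnected_connectedComponentIn_iff.2 hx,
    fun hqC => connectedComponentIn_subset _ _ hqC hqV, hfreq⟩
  rw [connectedComponentIn_eq_image hx]
  exact isClosed_connectedComponent.isCompact.image continuous_subtype_val

section PropCW

variable [MetricSpace X] {f : X ≃ₜ X}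

theorem PropCW.exists_pos_le_dist_hIter (hf : PropCW f) {C : Set X} (hC : IsCompact C)
    (hC' : IsConnected C) {q : X} (hq : q ∉ C) :
    ∃ c > 0, ∀ n, ∀ z ∈ C, c ≤ dist (hIter f n q) (hIter f n z) :=
  ⟨_, hf q C hC'.nonempty hC hC' hq, fun n z hz =>
    (ciInf_le ⟨0, by rintro _ ⟨k, rfl⟩; exact infDist_nonneg⟩ n).trans
      (infDist_le_dist_of_mem (mem_image_of_mem _ hz))⟩

theorem PropCW.exists_pos_frequently_le_dist_hIter [CompactSpace X] (hf : PropCW f) {q : X}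
    (hq : SemiLocallyConnectedAt q) {U : Set X} (hU : IsOpen U) (hqU : q ∈ U) {ι : Type*}
    {l : Filter ι} [l.NeBot] {z : ι → X} (hz : ∀ᶠ i in l, z i ∉ U) :
    ∃ c > 0, ∃ᶠ i in l, ∀ n, c ≤ dist (hIter f n q) (hIter f n (z i)) := by
  obtain ⟨C, hC, hC', hqC, hfreq⟩ := hq.exists_continuum_frequently_mem hU hqU hz
  obtain ⟨c, hc, hcC⟩ := hf.exists_pos_le_dist_hIter hC hC' hqC
  exact ⟨c, hc, hfreq.mono fun i hi n => hcC n _ hi⟩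

theorem PropCW.frequently_dist_hIter_neg_lt [CompactSpace X] (hf : PropCW f) {x y : X}
    (hx : SemiLocallyConnectedAt x) {ι : Type*} {l : Filter ι} [l.NeBot] {m : ι → ℤ}
    (hm : Tendsto (fun i => hIter f (m i) x) l (𝓝 y)) {θ : ℝ} (hθ : 0 < θ) :
    ∃ᶠ i in l, dist (hIter f (-m i) y) x < θ := by
  by_contra h
  obtain ⟨c, hc, hfreq⟩ := hf.exists_pos_frequently_le_dist_hIter hx isOpen_ball
    (mem_ball_self hθ) (z := fun i => hIter f (-m i) y) (by simpa [mem_ball] using h)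
  obtain ⟨i, hci, hyi⟩ := (hfreq.and_eventually (Metric.tendsto_nhds.1 hm c hc)).exists
  have := hci (m i)
  rw [hIter_hIter_neg] at this
  exact hyi.not_ge this

theorem PropCW.not_eventually_le_dist_hIter [CompactSpace X] (hf : PropCW f)
    {p a : X} (hp : SemiLocallyConnectedAt p) (ha : SemiLocallyConnectedAt a) {ι : Type*}
    {l : Filter ι} [l.NeBot] {w : ι → X} {m : ι → ℤ} (hw : Tendsto w l (𝓝 p))
    (hm : Tendsto (fun i => hIter f (m i) p) l (𝓝 a)) {ε : ℝ} (hε : 0 < ε) :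
    ¬ ∀ᶠ i in l, ε ≤ dist (hIter f (m i) (w i)) (hIter f (m i) p) := by
  intro hfar
  have hza : ∀ᶠ i in l, hIter f (m i) (w i) ∉ ball a (ε / 2) := by
    filter_upwards [hfar, Metric.tendsto_nhds.1 hm _ (half_pos hε)] with i hi hi'
    rw [mem_ball]
    linarith [dist_triangle (hIter f (m i) (w i)) a (hIter f (m i) p),
      dist_comm a (hIter f (m i) p)]
  obtain ⟨c, hc, hfreq⟩ := hf.exists_pos_frequently_le_dist_hIter ha isOpen_ball
    (mem_ball_self (half_pos hε)) hza
  set s := {i | c ≤ dist (hIter f (-m i) a) (w i)}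
  have : (l ⊓ 𝓟 s).NeBot := frequently_iff_neBot.1 <| hfreq.mono fun i hi => by
    simpa only [hIter_neg_hIter] using hi (-m i)
  obtain ⟨i, hi, hwi, his⟩ := ((hf.frequently_dist_hIter_neg_lt hp
    (hm.mono_left inf_le_left) (half_pos hc)).and_eventually
    ((Metric.tendsto_nhds.1 (hw.mono_left inf_le_left) _ (half_pos hc)).and
      (mem_inf_of_right (mem_principal_self s)))).exists
  linarith [dist_triangle (hIter f (-m i) a) p (w i), dist_comm p (w i), show i ∈ s from his]

theorem PropCW.equicontinuousAt_hIter [CompactSpace X] (hf : PropCW f)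
    (hslc : ∀ p : X, SemiLocallyConnectedAt p) (p : X) : EquicontinuousAt (hIter f) p := by
  rw [Metric.equicontinuousAt_iff]
  by_contra! ⟨ε, hε, hfar⟩
  choose w hwp m hm using fun k : ℕ => hfar (1 / ((k : ℝ) + 1)) (by positivity)
  have hw : Tendsto w atTop (𝓝 p) := tendsto_iff_dist_tendsto_zero.2 <|
    squeeze_zero (fun _ => dist_nonneg) (fun k => (hwp k).le)
      tendsto_one_div_add_atTop_nhds_zero_nat
  obtain ⟨a, -, φ, hφ, ha⟩ :=
    isCompact_univ.tendsto_subseq fun k => mem_univ (hIter f (m k) p)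
  exact hf.not_eventually_le_dist_hIter (hslc p) (hslc a) (hw.comp hφ.tendsto_atTop) ha hε
    (Eventually.of_forall fun k => (dist_comm _ _).trans_ge (hm (φ k)))

end PropCW

/-- For a homeomorphism of a semi-locally connected compact metric space,
equicontinuity is equivalent to property (CW). -/
theorem equicont_iff_propCW_of_semiLocallyConnected
    [MetricSpace X] [CompactSpace X] (f : X ≃ₜ X)
    (hslc : ∀ p : X, SemiLocallyConnectedAt p) :
    EquicontHomeo f ↔ PropCW f :=
  ⟨EquicontHomeo.propCW, fun hf => equicontHomeo_of_uniformEquicontinuous <|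
    CompactSpace.uniformEquicontinuous_of_equicontinuous (hf.equicontinuousAt_hIter hslc)⟩
end

section
/- Let f : X → X be a homeomorphism of a compact metric space X satisfying property (CW). Then every point at which X is semi-locally connected is an almost automorphic point of f; that is, X^{slc} ⊆ A(f). -/
open Metric Filter Topology Set

variable {X : Type*}

lemma hIter_apply_neg [TopologicalSpace X] (f : X ≃ₜ X) (n : ℤ) (y : X) :
    hIter f n (hIter f (-n) y) = y := by
  show (f.toEquiv ^ n) ((f.toEquiv ^ (-n)) y) = y
  rw [← Equiv.Perm.mul_apply, ← zpow_add, add_neg_cancel, zpow_zero, Equiv.Perm.one_apply]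

lemma isClosed_connectedComponentIn' {F : Set X} [TopologicalSpace X] (hF : IsClosed F)
    (x : X) : IsClosed (connectedComponentIn F x) := by
  by_cases hx : x ∈ F
  · rw [connectedComponentIn_eq_image hx]
    exact hF.isClosedEmbedding_subtypeVal.isClosedMap _ isClosed_connectedComponent
  · rw [connectedComponentIn_eq_empty hx]; exact isClosed_empty

/-- If `f` satisfies (CW), then every point at which `X` is semi-locally
connected is almost automorphic, i.e. `X^{slc} ⊆ A(f)`. -/
theorem slc_subset_almostAutomorphic
    [MetricSpace X] [CompactSpace X] (f : X ≃ₜ X) (hcw : PropCW f) :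
    {p : X | SemiLocallyConnectedAt p} ⊆ {x : X | AlmostAutomorphicPt f x} := by
  intro p hp n y hny
  rw [Metric.tendsto_atTop]
  intro ε hε
  obtain ⟨V, hVopen, hpV, hVU, 𝒞, h𝒞comp, hcov⟩ :=
    hp (ball p ε) isOpen_ball (mem_ball_self hε)
  set g : Set X → ℝ := fun C => ⨅ k : ℤ, infDist (hIter f k p) (hIter f k '' C) with hg_def
  have hg : ∀ C ∈ 𝒞, 0 < g C := by
    intro C hC
    obtain ⟨x, hx, rfl⟩ := h𝒞comp C hC
    exact hcw p _ (connectedComponentIn_nonempty_iff.mpr hx)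
      (isClosed_connectedComponentIn' hVopen.isClosed_compl x).isCompact
      (isConnected_connectedComponentIn_iff.mpr hx)
      (fun h => connectedComponentIn_subset _ _ h hpV)
  obtain ⟨c, hc0, hc⟩ : ∃ c > 0, ∀ C ∈ 𝒞, c ≤ g C := by
    rcases 𝒞.eq_empty_or_nonempty with h | h
    · exact ⟨1, one_pos, by simp [h]⟩
    · obtain ⟨C₀, hC₀, hmin⟩ := 𝒞.exists_min_image g h
      exact ⟨g C₀, hg C₀ hC₀, hmin⟩
  obtain ⟨N, hN⟩ := (Metric.tendsto_atTop.mp hny) c hc0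
  refine ⟨N, fun i hi => ?_⟩
  by_contra hcon
  have hmem : hIter f (-(n i)) y ∈ (ball p ε)ᶜ := by
    simp only [mem_compl_iff, mem_ball, not_lt] at hcon ⊢
    exact hcon
  obtain ⟨C, hC, hyC⟩ := mem_iUnion₂.mp (hcov hmem)
  have hy' : y ∈ hIter f (n i) '' C :=
    ⟨hIter f (-(n i)) y, hyC, hIter_apply_neg f (n i) y⟩
  have hbdd : BddBelow (Set.range fun k : ℤ => infDist (hIter f k p) (hIter f k '' C)) :=
    ⟨0, forall_mem_range.mpr fun k => infDist_nonneg⟩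
  have h1 : g C ≤ infDist (hIter f (n i) p) (hIter f (n i) '' C) := ciInf_le hbdd (n i)
  have h2 : infDist (hIter f (n i) p) (hIter f (n i) '' C) ≤ dist (hIter f (n i) p) y :=
    infDist_le_dist_of_mem hy'
  have := hN i hi
  linarith [hc C hC]
end

section
/- Let p be an almost periodic point of a homeomorphism f : X → X of a compact metric space X. If for every ε > 0 there is δ > 0 such that whenever y ∈ X and n ∈ ℤ satisfy d(f^n(p), f^n(y)) ≤ δ one has d(p,y) ≤ ε, then p is locally almost periodic. -/
open Metric Filter Topology Set

variable {X : Type*}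

/-- An almost periodic point `p` satisfying the `ε`-`δ` condition is
locally almost periodic. -/
theorem almostPeriodic_locallyAlmostPeriodic
    [MetricSpace X] [CompactSpace X] (f : X ≃ₜ X) (p : X)
    (hap : AlmostPeriodicPt f p)
    (h : ∀ ε > (0 : ℝ), ∃ δ > (0 : ℝ), ∀ (y : X) (n : ℤ),
      dist (hIter f n p) (hIter f n y) ≤ δ → dist p y ≤ ε) :
    LocallyAlmostPeriodicPt f p := by
  intro U hU
  obtain ⟨ε, hε, hball⟩ := Metric.nhds_basis_closedBall.mem_iff.mp hU
  obtain ⟨δ, hδ, hδh⟩ := h ε hε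
  obtain ⟨F₀, ⟨l, hl, hF₀syn⟩, hF₀⟩ :=
    hap (Metric.ball p (δ / 2)) (Metric.ball_mem_nhds _ (by positivity))
  refine ⟨Metric.ball p (min (δ / 2) ε), Metric.ball_mem_nhds _ (by positivity), ?_,
    Neg.neg '' F₀, ⟨l, hl, ?_⟩, ?_⟩
  · intro y hy
    exact hball (Metric.mem_closedBall.mpr
      (le_of_lt (lt_of_lt_of_le (Metric.mem_ball.mp hy) (min_le_right _ _))))
  · intro n
    obtain ⟨m, hm, h1, h2⟩ := hF₀syn (-(n + l))
    exact ⟨-m, ⟨m, hm, rfl⟩, by linarith, by linarith⟩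
  · rintro n ⟨m, hm, rfl⟩ z ⟨y, hy, rfl⟩
    have hinv : hIter f m (hIter f (-m) y) = y := by
      show (f.toEquiv ^ m) ((f.toEquiv ^ (-m)) y) = y
      rw [← Equiv.Perm.mul_apply, ← zpow_add]
      simp
    apply hball
    rw [Metric.mem_closedBall, dist_comm]
    apply hδh (hIter f (-m) y) m
    rw [hinv]
    have h1 : dist (hIter f m p) p < δ / 2 := hF₀ m hm
    have h2 : dist p y < δ / 2 :=
      lt_of_lt_of_le (by rw [dist_comm]; exact hy) (min_le_left _ _)
    calc dist (hIter f m p) y ≤ dist (hIter f m p) p + dist p y := dist_triangle _ _ _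
      _ ≤ δ := by linarith
end

section
/- A homeomorphism f : X → X of a compact metric space X is equicontinuous if and only if it is distal and locally almost periodic (i.e., every point of X is locally almost periodic). -/
open Metric Filter Topology Set

variable {X : Type*}

/-!
Equicontinuity makes `{fⁿ}` totally bounded for uniform convergence (Arzelà–Ascoli): finitely
many iterates `fᵏ`, `|k| ≤ c`, approximate every `fⁿ` uniformly, so `fⁿ⁻ᵏ x` is close to `x` for
some such `k`, and the return times of `x` to a ball are syndetic. Shifting a ball around `x` by
these return times gives local almost periodicity, and distality is immediate.

Conversely, if equicontinuity fails at `z`, compactness yields `xₖ → z` and times `nₖ` with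
`f^nₖ z → a`, `f^nₖ xₖ → b` and `a ≠ b`. Local almost periodicity at `z` sends `f^nₖ z` and
`f^nₖ xₖ` back close to `z` within a bounded delay; over that delay their orbits shadow those of
`a` and `b`, so `a` and `b` are proximal, contradicting distality. On a compact space
equicontinuity at every point is uniform.
-/

section Iterates

variable [TopologicalSpace X] (f : X ≃ₜ X)

def Homeomorph.toPerm : (X ≃ₜ X) →* Equiv.Perm X where
  toFun := Homeomorph.toEquiv
  map_one' := rfl
  map_mul' _ _ := rfl

lemma hIter_eq_coe_zpow (n : ℤ) : hIter f n = ⇑(f ^ n) :=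
  congrArg DFunLike.coe (map_zpow Homeomorph.toPerm f n).symm

lemma continuous_hIter (n : ℤ) : Continuous (hIter f n) := by
  rw [hIter_eq_coe_zpow]
  exact (f ^ n).continuous

lemma hIter_add_apply (m n : ℤ) (x : X) : hIter f (m + n) x = hIter f m (hIter f n x) := by
  simp only [hIter_eq_coe_zpow, zpow_add, Homeomorph.mul_apply]

lemma hIter_neg_apply_hIter (n : ℤ) (x : X) : hIter f (-n) (hIter f n x) = x := by
  rw [← hIter_add_apply, neg_add_cancel]
  rfl

lemma hIter_apply_hIter_neg (n : ℤ) (x : X) : hIter f n (hIter f (-n) x) = x := by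
  simpa using hIter_neg_apply_hIter f (-n) x

end Iterates

lemma Equicontinuous.exists_finset_forall_exists_dist_lt {ι Y : Type*} [TopologicalSpace X]
    [CompactSpace X] [PseudoMetricSpace Y] [CompactSpace Y] {F : ι → X → Y}
    (hF : Equicontinuous F) {ε : ℝ} (hε : 0 < ε) :
    ∃ S : Finset ι, ∀ i, ∃ j ∈ S, ∀ x, dist (F i x) (F j x) < ε := by
  let _ : UniformSpace ι := (Pi.uniformSpace _).comap F
  have hpi : IsUniformInducing F := ⟨rfl⟩
  have hunif : UniformContinuous (UniformFun.ofFun ∘ F) :=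
    (hF.isUniformInducing_uniformFun_iff_pi.2 hpi).uniformContinuous
  have hbdd : TotallyBounded (univ : Set ι) :=
    totallyBounded_preimage hpi isCompact_univ.totallyBounded
  obtain ⟨t, -, ht, hcover⟩ := totallyBounded_iff_subset.1 hbdd _
    (hunif ((UniformFun.hasBasis_uniformity X Y).mem_of_mem (dist_mem_uniformity hε)))
  refine ⟨ht.toFinset, fun i => ?_⟩
  obtain ⟨j, hj, hij⟩ := mem_iUnion₂.1 (hcover (mem_univ i))
  exact ⟨j, ht.mem_toFinset.2 hj, hij⟩

section PseudoMetricSpace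

variable [PseudoMetricSpace X] {f : X ≃ₜ X}

lemma syndeticZ_setOf_dist_hIter_lt [CompactSpace X] (hf : Equicontinuous (hIter f)) (x : X)
    {ε : ℝ} (hε : 0 < ε) : SyndeticZ {m : ℤ | dist (hIter f m x) x < ε} := by
  obtain ⟨S, hS⟩ := hf.exists_finset_forall_exists_dist_lt hε
  obtain ⟨c, hc⟩ : ∃ c : ℕ, ∀ k ∈ S, k.natAbs ≤ c := ⟨_, fun k => S.le_sup (f := Int.natAbs)⟩
  refine ⟨2 * c + 1, by omega, fun n => ?_⟩
  obtain ⟨k, hk, hclose⟩ := hS (n + c)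
  have hkc := hc k hk
  refine ⟨n + c - k, ?_, by omega, by omega⟩
  have := hclose (hIter f (-k) x)
  rwa [hIter_apply_hIter_neg, ← hIter_add_apply, ← sub_eq_add_neg] at this

lemma Equicontinuous.locallyAlmostPeriodicPt [CompactSpace X] (hf : Equicontinuous (hIter f))
    (x : X) : LocallyAlmostPeriodicPt f x := by
  intro U hU
  obtain ⟨ε, hε, hball⟩ := Metric.mem_nhds_iff.1 hU
  obtain ⟨δ, hδ, hclose⟩ := Metric.equicontinuousAt_iff.1 (hf x) (ε / 2) (half_pos hε)
  refine ⟨ball x (min δ ε), ball_mem_nhds x (lt_min hδ hε),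
    (ball_subset_ball (min_le_right δ ε)).trans hball, _,
    syndeticZ_setOf_dist_hIter_lt hf x (half_pos hε), ?_⟩
  rintro n (hn : dist _ x < ε / 2) _ ⟨y, hy, rfl⟩
  have hyx : dist (hIter f n x) (hIter f n y) < ε / 2 :=
    hclose y ((mem_ball.1 hy).trans_le (min_le_left δ ε)) n
  refine hball (mem_ball.2 ?_)
  calc dist (hIter f n y) x ≤ dist (hIter f n x) (hIter f n y) + dist (hIter f n x) x :=
        dist_triangle_left _ _ _
    _ < ε := by linarith

lemma LocallyAlmostPeriodicPt.exists_dist_hIter_lt {ι : Type*} {l : Filter ι} [l.NeBot]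
    {z a b : X} (hz : LocallyAlmostPeriodicPt f z) {x y : ι → X} {n : ι → ℤ}
    (hx : Tendsto x l (𝓝 z)) (hy : Tendsto y l (𝓝 z))
    (ha : Tendsto (fun i => hIter f (n i) (x i)) l (𝓝 a))
    (hb : Tendsto (fun i => hIter f (n i) (y i)) l (𝓝 b)) {ρ : ℝ} (hρ : 0 < ρ) :
    ∃ r : ℤ, dist (hIter f r a) (hIter f r b) < ρ := by
  obtain ⟨V, hV, -, F, ⟨L, -, hL⟩, hF⟩ := hz _ (ball_mem_nhds z (by positivity : 0 < ρ / 4))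
  have hnear : ∀ {u : ι → X} {c : X}, Tendsto u l (𝓝 c) →
      ∀ᶠ i in l, ∀ j ∈ Finset.Icc 0 L, dist (hIter f j (u i)) (hIter f j c) < ρ / 4 :=
    fun hu => (eventually_all_finset _).2 fun j _ =>
      ((continuous_hIter f j).tendsto _).comp hu (ball_mem_nhds _ (by positivity))
  obtain ⟨i, ⟨hxV, hyV⟩, hxa, hyb⟩ :=
    ((hx.eventually_mem hV).and (hy.eventually_mem hV)).and ((hnear ha).and (hnear hb)) |>.exists
  obtain ⟨m, hmF, hnm, hmL⟩ := hL (n i)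
  have hm : ∀ w, hIter f m w = hIter f (m - n i) (hIter f (n i) w) := fun w => by
    rw [← hIter_add_apply, sub_add_cancel]
  have hr : m - n i ∈ Finset.Icc 0 L := Finset.mem_Icc.2 ⟨by omega, by omega⟩
  have hxz : dist (hIter f m (x i)) z < ρ / 4 := hF m hmF ⟨x i, hxV, rfl⟩
  have hyz : dist (hIter f m (y i)) z < ρ / 4 := hF m hmF ⟨y i, hyV, rfl⟩
  have hxa' : dist (hIter f m (x i)) (hIter f (m - n i) a) < ρ / 4 := by rw [hm]; exact hxa _ hr
  have hyb' : dist (hIter f m (y i)) (hIter f (m - n i) b) < ρ / 4 := by rw [hm]; exact hyb _ hr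
  refine ⟨m - n i, ?_⟩
  linarith [dist_triangle4 (hIter f (m - n i) a) (hIter f m (x i)) (hIter f m (y i))
    (hIter f (m - n i) b), dist_triangle_right (hIter f m (x i)) (hIter f m (y i)) z,
    dist_comm (hIter f (m - n i) a) (hIter f m (x i))]

end PseudoMetricSpace

section MetricSpace

variable [MetricSpace X] {f : X ≃ₜ X}

lemma equicontHomeo_iff_uniformEquicontinuous :
    EquicontHomeo f ↔ UniformEquicontinuous (hIter f) := by
  rw [Metric.uniformEquicontinuous_iff]
  constructor
  · intro hf ε hε
    obtain ⟨δ, hδ, hclose⟩ := hf (ε / 2) (half_pos hε)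
    exact ⟨δ, hδ, fun x y hxy n => (hclose x y hxy.le n).trans_lt (half_lt_self hε)⟩
  · intro hf ε hε
    obtain ⟨δ, hδ, hclose⟩ := hf ε hε
    exact ⟨δ / 2, half_pos hδ, fun x y hxy n =>
      (hclose x y (hxy.trans_lt (half_lt_self hδ)) n).le⟩

lemma UniformEquicontinuous.distalHomeo (hf : UniformEquicontinuous (hIter f)) :
    DistalHomeo f := by
  intro x y hxy
  obtain ⟨δ, hδ, hclose⟩ := Metric.uniformEquicontinuous_iff.1 hf (dist x y) (dist_pos.2 hxy)
  refine hδ.trans_le (le_ciInf fun n => not_lt.1 fun hn => ?_)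
  simpa only [hIter_neg_apply_hIter, lt_self_iff_false] using hclose _ _ hn (-n)

lemma DistalHomeo.eq_of_forall_exists_dist_hIter_lt (hf : DistalHomeo f) {a b : X}
    (h : ∀ ρ > 0, ∃ r : ℤ, dist (hIter f r a) (hIter f r b) < ρ) : a = b := by
  by_contra hab
  obtain ⟨r, hr⟩ := h _ (hf a b hab)
  have hinf : ⨅ n : ℤ, dist (hIter f n a) (hIter f n b) ≤ dist (hIter f r a) (hIter f r b) :=
    ciInf_le ⟨0, forall_mem_range.2 fun _ => dist_nonneg⟩ r
  exact hinf.not_gt hr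

lemma DistalHomeo.equicontinuousAt_hIter [CompactSpace X] (hf : DistalHomeo f) {z : X}
    (hz : LocallyAlmostPeriodicPt f z) : EquicontinuousAt (hIter f) z := by
  rw [Metric.equicontinuousAt_iff_right]
  intro ε hε
  by_contra hfar
  simp only [not_eventually, not_forall, not_lt] at hfar
  obtain ⟨x, hx, hfar⟩ := exists_seq_forall_of_frequently hfar
  choose n hn using hfar
  obtain ⟨⟨a, b⟩, -, φ, hφ, hlim⟩ := isCompact_univ.tendsto_subseq
    (x := fun k => (hIter f (n k) z, hIter f (n k) (x k))) fun k => mem_univ _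
  have hab : a = b := hf.eq_of_forall_exists_dist_hIter_lt fun ρ hρ =>
    hz.exists_dist_hIter_lt tendsto_const_nhds (hx.comp hφ.tendsto_atTop) hlim.fst_nhds
      hlim.snd_nhds hρ
  subst hab
  have := le_of_tendsto_of_tendsto' tendsto_const_nhds (hlim.fst_nhds.dist hlim.snd_nhds)
    fun k => hn (φ k)
  rw [dist_self] at this
  linarith

end MetricSpace

/-- A homeomorphism of a compact metric space is equicontinuous iff it is
distal and locally almost periodic. -/
theorem equicont_iff_distal_and_locallyAlmostPeriodic
    [MetricSpace X] [CompactSpace X] (f : X ≃ₜ X) :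
    EquicontHomeo f ↔ (DistalHomeo f ∧ ∀ x : X, LocallyAlmostPeriodicPt f x) := by
  rw [equicontHomeo_iff_uniformEquicontinuous]
  refine ⟨fun hf => ⟨hf.distalHomeo, hf.equicontinuous.locallyAlmostPeriodicPt⟩, ?_⟩
  rintro ⟨hdistal, hlap⟩
  exact CompactSpace.uniformEquicontinuous_of_equicontinuous fun z =>
    hdistal.equicontinuousAt_hIter (hlap z)
end

section
/- A homeomorphism f : X → X of a compact metric space X is equicontinuous if and only if inf_{n ∈ ℤ} dist(f^n(x), f^n(K)) > 0 for every x ∈ X and every nonempty compact subset K of X with x ∉ K. -/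
open Metric Filter Topology Set

variable {X : Type*}

lemma hIter_cancel [TopologicalSpace X] (f : X ≃ₜ X) (n : ℤ) (a : X) :
    hIter f (-n) (hIter f n a) = a := by
  simp [hIter, zpow_neg]

lemma hIter_cancel' [TopologicalSpace X] (f : X ≃ₜ X) (n : ℤ) (a : X) :
    hIter f n (hIter f (-n) a) = a := by
  simpa using hIter_cancel f (-n) a

lemma bdd_infDist [MetricSpace X] (f : X ≃ₜ X) (x : X) (K : Set X) :
    BddBelow (Set.range fun m : ℤ => infDist (hIter f m x) (hIter f m '' K)) := by
  refine ⟨0, ?_⟩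
  rintro _ ⟨m, rfl⟩
  exact infDist_nonneg

/-- A homeomorphism of a compact metric space is equicontinuous iff
`inf_{n ∈ ℤ} dist(fⁿ x, fⁿ K) > 0` for every `x` and nonempty compact `K` with `x ∉ K`. -/
theorem equicont_iff_infDist_pos
    [MetricSpace X] [CompactSpace X] (f : X ≃ₜ X) :
    EquicontHomeo f ↔
      ∀ (x : X) (K : Set X), K.Nonempty → IsCompact K → x ∉ K →
        0 < ⨅ n : ℤ, Metric.infDist (hIter f n x) (hIter f n '' K) := by
  constructor
  · intro hEq x K hKne hKc hxK
    have hpos : 0 < infDist x K := (hKc.isClosed.notMem_iff_infDist_pos hKne).1 hxK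
    obtain ⟨δ, hδ, hδ'⟩ := hEq (infDist x K / 2) (by positivity)
    have key : ∀ n : ℤ, ∀ y ∈ K, δ ≤ dist (hIter f n x) (hIter f n y) := by
      intro n y hy
      by_contra h
      push_neg at h
      have h2 := hδ' (hIter f n x) (hIter f n y) h.le (-n)
      rw [hIter_cancel, hIter_cancel] at h2
      have h3 : infDist x K ≤ infDist x K / 2 := le_trans (infDist_le_dist_of_mem hy) h2
      linarith
    have hbound : ∀ n : ℤ, δ ≤ infDist (hIter f n x) (hIter f n '' K) := by
      intro n
      rw [infDist_eq_iInf]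
      have : Nonempty ↥(hIter f n '' K) := (hKne.image _).to_subtype
      refine le_ciInf ?_
      rintro ⟨_, y, hy, rfl⟩
      exact key n y hy
    exact lt_of_lt_of_le hδ (le_ciInf hbound)
  · intro hcond
    by_contra hne
    set F : ℤ → X → X := fun n => hIter f n with hF
    have hnUE : ¬ UniformEquicontinuous F := by
      intro hUE
      apply hne
      intro ε hε
      obtain ⟨δ, hδ, h⟩ := Metric.uniformEquicontinuous_iff.1 hUE ε hε
      exact ⟨δ / 2, by linarith, fun a b hab n =>
        (h a b (lt_of_le_of_lt hab (by linarith)) n).le⟩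
    have hex : ∃ x, ¬ EquicontinuousAt F x := by
      by_contra h
      push_neg at h
      exact hnUE (CompactSpace.uniformEquicontinuous_of_equicontinuous h)
    obtain ⟨x, hx⟩ := hex
    rw [Metric.equicontinuousAt_iff] at hx
    push_neg at hx
    obtain ⟨ε, hε, hx⟩ := hx
    have hseq : ∀ k : ℕ, ∃ z, dist z x < 1 / ((k : ℝ) + 1) ∧
        ∃ n : ℤ, ε ≤ dist (F n x) (F n z) :=
      fun k => hx (1 / ((k : ℝ) + 1)) (by positivity)
    choose y hy n hn using hseq
    obtain ⟨u, φ, hφ, hu⟩ := CompactSpace.tendsto_subseq (fun k => F (n k) x)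
    obtain ⟨v, ψ, hψ, hv⟩ := CompactSpace.tendsto_subseq (fun k => F (n (φ k)) (y (φ k)))
    set σ : ℕ → ℕ := fun k => φ (ψ k) with hσ
    have hσk : ∀ k, k ≤ σ k := fun k => (hφ.comp hψ).le_apply
    have hu' : Tendsto (fun k => F (n (σ k)) x) atTop (𝓝 u) :=
      hu.comp hψ.tendsto_atTop
    have hv' : Tendsto (fun k => F (n (σ k)) (y (σ k))) atTop (𝓝 v) := hv
    -- y (σ k) → x
    have hyx : Tendsto (fun k => y (σ k)) atTop (𝓝 x) := by
      rw [Metric.tendsto_atTop]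
      intro r hr
      obtain ⟨N, hN⟩ := exists_nat_one_div_lt hr
      refine ⟨N, fun k hk => ?_⟩
      have h1 : dist (y (σ k)) x < 1 / ((σ k : ℝ) + 1) := hy (σ k)
      have h2 : (1 : ℝ) / ((σ k : ℝ) + 1) ≤ 1 / ((N : ℝ) + 1) := by
        apply one_div_le_one_div_of_le (by positivity)
        have : (N : ℝ) ≤ (σ k : ℝ) := by
          exact_mod_cast le_trans hk (hσk k)
        linarith
      exact lt_of_lt_of_le h1 (le_trans h2 hN.le)
    -- Lemma A : f^{-n_k} u → x
    have hA : Tendsto (fun k => F (-(n (σ k))) u) atTop (𝓝 x) := by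
      rw [Metric.tendsto_atTop]
      intro r hr
      by_cases hcs : ((ball x r)ᶜ : Set X) = ∅
      · refine ⟨0, fun k _ => ?_⟩
        have : F (-(n (σ k))) u ∈ ball x r := by
          by_contra h
          exact (eq_empty_iff_forall_notMem.1 hcs) _ h
        simpa [mem_ball] using this
      · have hKne : ((ball x r)ᶜ : Set X).Nonempty := nonempty_iff_ne_empty.2 hcs
        have hxK : x ∉ ((ball x r)ᶜ : Set X) := fun h => h (mem_ball_self hr)
        have hc := hcond x _ hKne isOpen_ball.isClosed_compl.isCompact hxK
        obtain ⟨N, hN⟩ := Metric.tendsto_atTop.1 hu'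
          (⨅ m : ℤ, infDist (hIter f m x) (hIter f m '' (ball x r)ᶜ)) hc
        refine ⟨N, fun k hk => ?_⟩
        by_contra h
        push_neg at h
        have hmem : F (-(n (σ k))) u ∈ ((ball x r)ᶜ : Set X) := by
          simp only [mem_compl_iff, mem_ball]
          exact not_lt.2 h
        have h1 : infDist (hIter f (n (σ k)) x) (hIter f (n (σ k)) '' (ball x r)ᶜ) ≤
            dist (F (n (σ k)) x) u := by
          have heq : hIter f (n (σ k)) (F (-(n (σ k))) u) = u := hIter_cancel' f _ u
          calc infDist (hIter f (n (σ k)) x) (hIter f (n (σ k)) '' (ball x r)ᶜ)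
              ≤ dist (hIter f (n (σ k)) x) (hIter f (n (σ k)) (F (-(n (σ k))) u)) :=
                infDist_le_dist_of_mem (mem_image_of_mem _ hmem)
            _ = dist (F (n (σ k)) x) u := by rw [heq]
        have h2 := ciInf_le (bdd_infDist f x ((ball x r)ᶜ)) (n (σ k))
        exact absurd (lt_of_le_of_lt (h2.trans h1) (hN k hk)) (lt_irrefl _)
    -- dist u v ≥ ε
    have hdist_uv : ε ≤ dist u v :=
      ge_of_tendsto' (hu'.dist hv') (fun k => hn (σ k))
    -- eventually dist u (F (n σ k) (y σ k)) > ε/2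
    have hvd : Tendsto (fun k => dist u (F (n (σ k)) (y (σ k)))) atTop (𝓝 (dist u v)) :=
      tendsto_const_nhds.dist hv'
    have hev : ∀ᶠ k in atTop, ε / 2 < dist u (F (n (σ k)) (y (σ k))) :=
      hvd.eventually (eventually_gt_nhds (by linarith))
    obtain ⟨N, hN⟩ := eventually_atTop.1 hev
    set K : Set X := closure {p | ∃ k, N ≤ k ∧ p = F (n (σ k)) (y (σ k))} with hK
    have hKne : K.Nonempty := ⟨_, subset_closure ⟨N, le_refl N, rfl⟩⟩
    have hKc : IsCompact K := isClosed_closure.isCompact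
    have huK : u ∉ K := by
      intro hu_mem
      have hsub : K ⊆ {q | ε / 2 ≤ dist u q} := by
        apply closure_minimal
        · rintro p ⟨k, hk, rfl⟩
          exact (hN k hk).le
        · exact isClosed_le continuous_const (Continuous.dist continuous_const continuous_id)
      have := hsub hu_mem
      simp only [mem_setOf_eq, dist_self] at this
      linarith
    have hcK := hcond u K hKne hKc huK
    set c := ⨅ m : ℤ, infDist (hIter f m u) (hIter f m '' K) with hc
    -- dist (F (-(n σ k)) u) (y σ k) → 0
    have h0 : Tendsto (fun k => dist (F (-(n (σ k))) u) (y (σ k))) atTop (𝓝 0) := by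
      have := hA.dist hyx
      simpa using this
    have hev2 : ∀ᶠ k in atTop, dist (F (-(n (σ k))) u) (y (σ k)) < c :=
      h0.eventually (eventually_lt_nhds hcK)
    obtain ⟨M, hM⟩ := eventually_atTop.1 hev2
    set k0 := max N M with hk0
    have hmemK : F (n (σ k0)) (y (σ k0)) ∈ K :=
      subset_closure ⟨k0, le_max_left N M, rfl⟩
    have h1 : infDist (hIter f (-(n (σ k0))) u) (hIter f (-(n (σ k0))) '' K) ≤
        dist (F (-(n (σ k0))) u) (y (σ k0)) := by
      have heq : hIter f (-(n (σ k0))) (F (n (σ k0)) (y (σ k0))) = y (σ k0) :=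
        hIter_cancel f _ _
      calc infDist (hIter f (-(n (σ k0))) u) (hIter f (-(n (σ k0))) '' K)
          ≤ dist (hIter f (-(n (σ k0))) u) (hIter f (-(n (σ k0))) (F (n (σ k0)) (y (σ k0)))) :=
            infDist_le_dist_of_mem (mem_image_of_mem _ hmemK)
        _ = dist (F (-(n (σ k0))) u) (y (σ k0)) := by rw [heq]
    have h2 : c ≤ infDist (hIter f (-(n (σ k0))) u) (hIter f (-(n (σ k0))) '' K) :=
      ciInf_le (bdd_infDist f u K) (-(n (σ k0)))
    exact absurd (lt_of_le_of_lt (h2.trans h1) (hM k0 (le_max_right N M))) (lt_irrefl _)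
end

section
/- Let f : X → X be a homeomorphism of a compact metric space X satisfying property (CW). Then inf_{n ∈ ℤ} dist(f^n(p), f^n(K)) > 0 for every point p at which X is semi-locally connected and every nonempty compact subset K of X with p ∉ K. -/
open Metric Filter Topology Set

variable {X : Type*}

lemma compact_cciIn {X : Type*} [TopologicalSpace X] [CompactSpace X] {F : Set X} {x : X}
    (hF : IsClosed F) (hx : x ∈ F) : IsCompact (connectedComponentIn F x) := by
  rw [connectedComponentIn_eq_image hx]
  have : CompactSpace F := isCompact_iff_compactSpace.mp (hF.isCompact)
  exact (isClosed_connectedComponent.isCompact).image continuous_subtype_val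

/-- If `f` satisfies (CW), then `inf_{n ∈ ℤ} dist(fⁿ p, fⁿ K) > 0` for every
point `p` at which `X` is semi-locally connected and nonempty compact `K` with `p ∉ K`. -/
theorem propCW_infDist_pos_at_slc
    [MetricSpace X] [CompactSpace X] (f : X ≃ₜ X) (hcw : PropCW f) :
    ∀ (p : X), SemiLocallyConnectedAt p → ∀ K : Set X, K.Nonempty → IsCompact K → p ∉ K →
      0 < ⨅ n : ℤ, Metric.infDist (hIter f n p) (hIter f n '' K) := by
  intro p hslc K hKne hKcp hpK
  -- U = Kᶜ is an open neighborhood of p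
  obtain ⟨V, hVopen, hpV, hVU, 𝒞, h𝒞comp, h𝒞cov⟩ :=
    hslc Kᶜ hKcp.isClosed.isOpen_compl hpK
  rw [compl_compl] at h𝒞cov
  -- 𝒞 is nonempty since K is nonempty
  obtain ⟨k0, hk0⟩ := hKne
  obtain ⟨C0, hC0mem, -⟩ := by simpa using h𝒞cov hk0
  have h𝒞ne : 𝒞.Nonempty := ⟨C0, hC0mem⟩
  -- each C ∈ 𝒞 has positive inf
  have hpos : ∀ C ∈ 𝒞, 0 < ⨅ n : ℤ, infDist (hIter f n p) (hIter f n '' C) := by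
    intro C hC
    obtain ⟨x, hxVc, rfl⟩ := h𝒞comp C hC
    have hVcclosed : IsClosed Vᶜ := hVopen.isClosed_compl
    refine hcw p _ (connectedComponentIn_nonempty_iff.mpr hxVc)
      (compact_cciIn hVcclosed hxVc) (isConnected_connectedComponentIn_iff.mpr hxVc) ?_
    exact fun hp => (connectedComponentIn_subset _ _ hp) hpV
  set ε : ℝ := 𝒞.inf' h𝒞ne (fun C => ⨅ n : ℤ, infDist (hIter f n p) (hIter f n '' C)) with hε
  have hεpos : 0 < ε := by
    rw [hε, Finset.lt_inf'_iff]
    exact hpos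
  refine lt_of_lt_of_le hεpos (le_ciInf fun n => ?_)
  rw [← not_lt, infDist_lt_iff ((Set.Nonempty.image _ ⟨k0, hk0⟩))]
  push_neg
  rintro y ⟨k, hk, rfl⟩
  obtain ⟨C, hCmem, hkC⟩ := by simpa using h𝒞cov hk
  calc ε ≤ ⨅ m : ℤ, infDist (hIter f m p) (hIter f m '' C) := Finset.inf'_le _ hCmem
    _ ≤ infDist (hIter f n p) (hIter f n '' C) :=
        ciInf_le ⟨0, fun r ⟨m, hm⟩ => hm ▸ infDist_nonneg⟩ n
    _ ≤ dist (hIter f n p) (hIter f n k) := infDist_le_dist_of_mem (mem_image_of_mem _ hkC)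
end

section
/- Let f : X → X be a homeomorphism of a compact metric space X and p ∈ X. Suppose that for every ε > 0 there is δ > 0 such that whenever y ∈ X and n ∈ ℤ satisfy d(f^n(p), f^n(y)) ≤ δ one has d(p,y) ≤ ε. Then p is an almost automorphic point of f: for every sequence n_i ∈ ℤ and every y ∈ X with f^{n_i}(p) → y, one has f^{-n_i}(y) → p. -/
open Metric Filter Topology Set

variable {X : Type*}

/-- The `ε`-`δ` condition at `p` implies `p` is almost automorphic. -/
theorem uniform_injectivity_imp_almostAutomorphic
    [MetricSpace X] [CompactSpace X] (f : X ≃ₜ X) (p : X)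
    (h : ∀ ε > (0 : ℝ), ∃ δ > (0 : ℝ), ∀ (y : X) (n : ℤ),
      dist (hIter f n p) (hIter f n y) ≤ δ → dist p y ≤ ε) :
    AlmostAutomorphicPt f p := by
  intro n y hy
  have key : ∀ i : ℕ, hIter f (n i) (hIter f (-(n i)) y) = y := by
    intro i
    simp only [hIter, zpow_neg]
    exact (f.toEquiv ^ n i).apply_symm_apply y
  rw [Metric.tendsto_atTop]
  intro ε hε
  obtain ⟨δ, hδ, hδ'⟩ := h (ε / 2) (by linarith)
  rw [Metric.tendsto_atTop] at hy
  obtain ⟨N, hN⟩ := hy δ hδ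
  refine ⟨N, fun i hi => ?_⟩
  have := hδ' (hIter f (-(n i)) y) (n i) (by rw [key i]; exact (hN i hi).le)
  rw [dist_comm]
  linarith
end
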